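/- Let G be an action operad and P a G-operad in sets such that for every n, every p ∈ P(n) and every g ∈ G(n), p·g = p implies πₙ(g) is the identity permutation. Then the monad P̲ on the category of sets is cartesian: the functor P̲ preserves pullbacks, and for every function f : X → Y the naturality squares of the unit η (with η_X(x) = [id; x]) and of the multiplication μ (with μ_X[p; [q₁; x̲₁],…,[qₙ; x̲ₙ]] = [μ(p; q₁,…,qₙ); x̲₁,…,x̲ₙ]) are pullback squares. -/

import Mathlib

/-- Cast an element of a dependent family along an equality of indices. -/
def castF (F : ℕ → Type) {a b : ℕ} (h : a = b) (x : F a) : F b := h ▸ x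

/-- Splitting off the first summand of a sigma type over `Fin (n+1)`. -/
def sigmaFinSucc {n : ℕ} (β : Fin (n + 1) → Type) :
    (Σ i : Fin (n + 1), β i) ≃ (β 0 ⊕ Σ i : Fin n, β i.succ) where
  toFun x := Fin.cases (motive := fun j => β j → β 0 ⊕ Σ i : Fin n, β i.succ)
    Sum.inl (fun i b => Sum.inr ⟨i, b⟩) x.1 x.2
  invFun s := Sum.elim (fun b => ⟨0, b⟩) (fun p => ⟨p.1.succ, p.2⟩) s
  left_inv x := by
    obtain ⟨i, b⟩ := x
    induction i using Fin.cases with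
    | zero => rfl
    | succ i => rfl
  right_inv s := by rcases s with b | ⟨i, b⟩ <;> rfl

/-- The lexicographic identification of a disjoint union of blocks
`Fin (k 0), …, Fin (k (n-1))` (in this order) with `Fin (k 0 + ⋯ + k (n-1))`. -/
def finSigmaEquiv : ∀ {n : ℕ} (k : Fin n → ℕ), (Σ i : Fin n, Fin (k i)) ≃ Fin (∑ i, k i)
  | 0, k => by
      haveI : IsEmpty (Fin (∑ i : Fin 0, k i)) := by
        rw [Finset.univ_eq_empty, Finset.sum_empty]; infer_instance
      exact Equiv.equivOfIsEmpty _ _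
  | n + 1, k =>
      (sigmaFinSucc fun i => Fin (k i)).trans <|
        ((Equiv.sumCongr (Equiv.refl (Fin (k 0))) (finSigmaEquiv fun i => k i.succ)).trans
          (finSumFinEquiv.trans (finCongr (Fin.sum_univ_succ k).symm)))

/-- Operadic composition in the symmetric operad:
`μ(σ; τ₁, …, τₙ) = σ⁺ · (τ₁ ⊕ ⋯ ⊕ τₙ)`. -/
def permOperadComp {n : ℕ} (k : Fin n → ℕ) (σ : Equiv.Perm (Fin n))
    (τ : ∀ i, Equiv.Perm (Fin (k i))) : Equiv.Perm (Fin (∑ i, k i)) :=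
  (finSigmaEquiv k).symm.trans <|
    ((Equiv.sigmaCongr (β₂ := fun j => Fin (k (σ.symm j))) σ
        fun i => (τ i).trans (finCongr (congrArg k (σ.symm_apply_apply i).symm))).trans
      ((finSigmaEquiv fun j => k (σ.symm j)).trans (finCongr (Equiv.sum_comp σ.symm k))))

lemma sum_sigma_eq {n : ℕ} (k : Fin n → ℕ) (m : ∀ i, Fin (k i) → ℕ) :
    (∑ s : Fin (∑ i, k i), m ((finSigmaEquiv k).symm s).1 ((finSigmaEquiv k).symm s).2)
      = ∑ i, ∑ j, m i j := by
  have h := Equiv.sum_comp (finSigmaEquiv k)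
    (fun s => m ((finSigmaEquiv k).symm s).1 ((finSigmaEquiv k).symm s).2)
  rw [← h]
  have h2 : ∀ p : (i : Fin n) × Fin (k i),
      m ((finSigmaEquiv k).symm ((finSigmaEquiv k) p)).fst
          ((finSigmaEquiv k).symm ((finSigmaEquiv k) p)).snd = m p.1 p.2 := by
    intro p; rw [Equiv.symm_apply_apply]
  rw [Finset.sum_congr rfl fun p _ => h2 p, ← Finset.univ_sigma_univ, Finset.sum_sigma]
/-- An action operad: an operad in sets whose levels are groups, with a map to the
symmetric operad that is levelwise a group homomorphism and an operad map, and
satisfying the exchange law relating group multiplication and operadic composition. -/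
structure ActionOperad (G : ℕ → Type) [∀ n, Group (G n)] where
  /-- the operadic unit `id ∈ G(1)` -/
  unit : G 1
  /-- operadic composition `μ : G(n) × G(k₁) × ⋯ × G(kₙ) → G(k₁+⋯+kₙ)` -/
  comp : ∀ {n : ℕ} {k : Fin n → ℕ}, G n → (∀ i, G (k i)) → G (∑ i, k i)
  /-- the underlying-permutation group homomorphisms `πₙ : G(n) → Σₙ` -/
  π : ∀ n : ℕ, G n →* Equiv.Perm (Fin n)
  /-- `μ(id; x) = x` -/
  unit_comp : ∀ {n : ℕ} (x : G n),
    castF G (Fin.sum_univ_one fun _ => n) (comp unit fun _ : Fin 1 => x) = x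
  /-- `μ(x; id, …, id) = x` -/
  comp_unit : ∀ {n : ℕ} (x : G n),
    castF G (by simp : (∑ _i : Fin n, 1) = n) (comp x fun _ : Fin n => unit) = x
  /-- associativity of operadic composition -/
  comp_assoc : ∀ {n : ℕ} {k : Fin n → ℕ} {m : ∀ i, Fin (k i) → ℕ}
      (x : G n) (y : ∀ i, G (k i)) (z : ∀ i j, G (m i j)),
      castF G (sum_sigma_eq k m)
        (comp (comp x y) fun s => z ((finSigmaEquiv k).symm s).1 ((finSigmaEquiv k).symm s).2)
        = comp x fun i => comp (y i) (z i)
  /-- `π` preserves the operadic unit -/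
  π_unit : π 1 unit = 1
  /-- `π` is a map of operads -/
  π_comp : ∀ {n : ℕ} {k : Fin n → ℕ} (g : G n) (f : ∀ i, G (k i)),
      π _ (comp g f) = permOperadComp k (π n g) fun i => π _ (f i)
  /-- the exchange law
  `μ(g; f₁,…,fₙ)·μ(g′; f₁′,…,fₙ′) = μ(g·g′; f_{π(g′)(1)}·f₁′, …, f_{π(g′)(n)}·fₙ′)` -/
  exchange : ∀ {n : ℕ} {k : Fin n → ℕ} (g g' : G n)
      (f : ∀ i, G (k ((π n g').symm i))) (f' : ∀ i, G (k i)),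
      castF G (Equiv.sum_comp (π n g').symm k) (comp g f) * comp g' f'
        = comp (g * g') fun i =>
            castF G (congrArg k ((π n g').symm_apply_apply i)) (f (π n g' i)) * f' i

/-- A `G`-operad for an action operad `G`: an operad `P` in sets together with a
right `G(n)`-action on each `P(n)` satisfying the two equivariance axioms. -/
structure GOperad (G : ℕ → Type) [∀ n, Group (G n)] (A : ActionOperad G) where
  /-- the underlying family of sets -/
  P : ℕ → Type
  /-- the operadic unit `id ∈ P(1)` -/
  unit : P 1
  /-- operadic composition -/
  comp : ∀ {n : ℕ} {k : Fin n → ℕ}, P n → (∀ i, P (k i)) → P (∑ i, k i)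
  /-- the right `G(n)`-action on `P(n)` -/
  act : ∀ {n : ℕ}, P n → G n → P n
  act_one : ∀ {n : ℕ} (x : P n), act x 1 = x
  act_mul : ∀ {n : ℕ} (x : P n) (g h : G n), act x (g * h) = act (act x g) h
  unit_comp : ∀ {n : ℕ} (x : P n),
    castF P (Fin.sum_univ_one fun _ => n) (comp unit fun _ : Fin 1 => x) = x
  comp_unit : ∀ {n : ℕ} (x : P n),
    castF P (by simp : (∑ _i : Fin n, 1) = n) (comp x fun _ : Fin n => unit) = x
  comp_assoc : ∀ {n : ℕ} {k : Fin n → ℕ} {m : ∀ i, Fin (k i) → ℕ}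
      (x : P n) (y : ∀ i, P (k i)) (z : ∀ i j, P (m i j)),
      castF P (sum_sigma_eq k m)
        (comp (comp x y) fun s => z ((finSigmaEquiv k).symm s).1 ((finSigmaEquiv k).symm s).2)
        = comp x fun i => comp (y i) (z i)
  /-- `μ(x; y₁·g₁, …, yₙ·gₙ) = μ(x; y₁, …, yₙ)·μ(e; g₁, …, gₙ)` -/
  equiv_inner : ∀ {n : ℕ} {k : Fin n → ℕ} (x : P n) (y : ∀ i, P (k i))
      (g : ∀ i, G (k i)),
      comp x (fun i => act (y i) (g i)) = act (comp x y) (A.comp (1 : G n) g)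
  /-- `μ(x·g; y₁, …, yₙ) = μ(x; y_{π(g)⁻¹(1)}, …, y_{π(g)⁻¹(n)})·μ(g; e, …, e)` -/
  equiv_outer : ∀ {n : ℕ} {k : Fin n → ℕ} (x : P n) (g : G n) (y : ∀ i, P (k i)),
      comp (act x g) y
        = castF P (Equiv.sum_comp (A.π n g).symm k)
            (act (comp x fun i => y ((A.π n g).symm i))
              (A.comp g fun i => (1 : G (k ((A.π n g).symm i)))))

open CategoryTheory

variable {G : ℕ → Type} [∀ n, Group (G n)] {A : ActionOperad G}

/-- The relation `(p·g; x₁,…,xₙ) ∼ (p; x_{π(g)⁻¹(1)},…,x_{π(g)⁻¹(n)})` defining the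
quotient `P(n) ×_{G(n)} Xⁿ`. -/
def PRel (P : GOperad G A) (n : ℕ) (X : Type) :
    P.P n × (Fin n → X) → P.P n × (Fin n → X) → Prop :=
  fun a b => ∃ g : G n, a.1 = P.act b.1 g ∧ ∀ i, b.2 i = a.2 ((A.π n g).symm i)

/-- The value `P̲(X) = ∐ₙ P(n) ×_{G(n)} Xⁿ` of the endofunctor associated to a
`G`-operad `P`. -/
def PApply (P : GOperad G A) (X : Type) : Type :=
  Σ n : ℕ, Quot (PRel P n X)

/-- The endofunctor `P̲` of the category of sets associated to a `G`-operad `P`. -/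
def PEndofunctor (P : GOperad G A) : Type ⥤ Type where
  obj X := PApply P X
  map {X Y} f := TypeCat.ofHom fun z =>
    ⟨z.1, Quot.lift (fun a => Quot.mk _ (a.1, fun i => f (a.2 i)))
      (by
        rintro a b ⟨g, h1, h2⟩
        exact Quot.sound ⟨g, h1, fun i => by show f (b.2 i) = f (a.2 _); rw [h2 i]⟩) z.2⟩
  map_id X := by
    refine ConcreteCategory.hom_ext _ _ fun z => ?_
    obtain ⟨n, q⟩ := z
    induction q using Quot.ind with
    | _ a => rfl
  map_comp {X Y Z} f g := by
    refine ConcreteCategory.hom_ext _ _ fun z => ?_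
    obtain ⟨n, q⟩ := z
    induction q using Quot.ind with
    | _ a => rfl

/-- The unit `η_X : X → P̲(X)`, `x ↦ [id; x]`, of the monad associated to a
`G`-operad `P`. -/
def pUnitMap (P : GOperad G A) (X : Type) : X ⟶ (PEndofunctor P).obj X :=
  TypeCat.ofHom fun x => ⟨1, Quot.mk _ (P.unit, fun _ => x)⟩

/-- The defining formula of the multiplication of the monad `P̲`:
`μ_X[p; [q₁; x̲₁], …, [qₙ; x̲ₙ]] = [μ(p; q₁,…,qₙ); x̲₁,…,x̲ₙ]`. -/
def IsPMulMap (P : GOperad G A)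
    (mu : ∀ X : Type, (PEndofunctor P).obj ((PEndofunctor P).obj X) ⟶
      (PEndofunctor P).obj X) : Prop :=
  ∀ (X : Type) (n : ℕ) (k : Fin n → ℕ) (p : P.P n) (q : ∀ i, P.P (k i))
      (xs : ∀ i, Fin (k i) → X),
    mu X ⟨n, Quot.mk _ (p, fun i => ⟨k i, Quot.mk _ (q i, xs i)⟩)⟩
      = ⟨∑ i, k i, Quot.mk _ (P.comp p q,
          fun s => xs ((finSigmaEquiv k).symm s).1 ((finSigmaEquiv k).symm s).2)⟩

/-!
Write elements of `P̲X` as classes `[p; x₁, …, xₙ]`. Two facts do all the work. First, if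
`P̲f z = [p; y]` then `z` has a representative `[p; x]` with the same operation `p` and
`f ∘ x = y`, since the relation only moves `p` inside its `G(n)`-orbit. Second, freeness makes
`[p; x] = [p; x']` force `x = x'`: the witnessing `g` fixes `p`, so `π(g) = 1`. For the
multiplication, two elements of `P̲P̲X` with the same image in `P̲P̲Y` can therefore be written
`[p; [q₁; x₁], …, [qₙ; xₙ]]` and `[p; [q₁; x₁'], …, [qₙ; xₙ']]`, with the same `p` and `qᵢ`;
if they also have the same image under `μ`, then `[μ(p; q); x] = [μ(p; q); x']`, so `x = x'`.
-/

namespace PApply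

variable (P : GOperad G A)

lemma pRel_equivalence (n : ℕ) (X : Type) : Equivalence (PRel P n X) where
  refl a := ⟨1, (P.act_one a.1).symm, fun i => by simp [Equiv.Perm.one_def]⟩
  symm := by
    rintro a b ⟨g, hab, hx⟩
    refine ⟨g⁻¹, by rw [hab, ← P.act_mul, mul_inv_cancel, P.act_one], fun i => ?_⟩
    simp [hx, Equiv.Perm.inv_def]
  trans := by
    rintro a b c ⟨g, hab, hx⟩ ⟨g', hbc, hx'⟩
    exact ⟨g' * g, by rw [hab, hbc, P.act_mul], fun i => by simp [hx, hx', Equiv.Perm.mul_def]⟩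

variable {P}

lemma mk_eq_mk_iff {X : Type} {n : ℕ} {a b : P.P n × (Fin n → X)} :
    (⟨n, Quot.mk _ a⟩ : PApply P X) = ⟨n, Quot.mk _ b⟩ ↔ PRel P n X a b :=
  sigma_mk_injective.eq_iff.trans (Quot.eq.trans (pRel_equivalence P n X).eqvGen_iff)

lemma mk_act_eq {X : Type} {n : ℕ} (p : P.P n) (g : G n) (xs : Fin n → X) :
    (⟨n, Quot.mk _ (P.act p g, xs)⟩ : PApply P X)
      = ⟨n, Quot.mk _ (p, fun i => xs ((A.π n g).symm i))⟩ :=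
  mk_eq_mk_iff.mpr ⟨g, rfl, fun _ => rfl⟩

lemma exists_eq_mk {X : Type} (z : PApply P X) :
    ∃ (n : ℕ) (p : P.P n) (xs : Fin n → X), z = ⟨n, Quot.mk _ (p, xs)⟩ := by
  obtain ⟨n, q⟩ := z
  obtain ⟨⟨p, xs⟩, rfl⟩ := Quot.exists_rep q
  exact ⟨n, p, xs, rfl⟩

lemma exists_eq_mk_pi {X : Type} {n : ℕ} (v : Fin n → PApply P X) :
    ∃ (k : Fin n → ℕ) (q : ∀ i, P.P (k i)) (xs : ∀ i, Fin (k i) → X),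
      v = fun i => ⟨k i, Quot.mk _ (q i, xs i)⟩ := by
  choose k q xs hv using fun i => exists_eq_mk (v i)
  exact ⟨k, q, xs, funext hv⟩

lemma exists_eq_mk_of_map_eq_mk {X Y : Type} (f : X ⟶ Y) {z : PApply P X} {n : ℕ}
    {p : P.P n} {ys : Fin n → Y}
    (h : (PEndofunctor P).map f z = ⟨n, Quot.mk _ (p, ys)⟩) :
    ∃ xs : Fin n → X, z = ⟨n, Quot.mk _ (p, xs)⟩ ∧ ∀ i, f (xs i) = ys i := by
  obtain ⟨m, r, xs, rfl⟩ := exists_eq_mk z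
  obtain rfl : m = n := congrArg Sigma.fst h
  obtain ⟨g, hr, hys⟩ := mk_eq_mk_iff.mp h
  refine ⟨_, ?_, fun i => (hys i).symm⟩
  rw [show r = P.act p g from hr]
  exact mk_act_eq p g xs

lemma eq_of_mk_eq_mk_of_free
    (hfree : ∀ (n : ℕ) (p : P.P n) (g : G n), P.act p g = p → A.π n g = 1)
    {X : Type} {n : ℕ} {p : P.P n} {xs ys : Fin n → X}
    (h : (⟨n, Quot.mk _ (p, xs)⟩ : PApply P X) = ⟨n, Quot.mk _ (p, ys)⟩) : xs = ys := by
  obtain ⟨g, hg, hxy⟩ := mk_eq_mk_iff.mp h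
  have hπ : A.π n g = 1 := hfree n p g hg.symm
  funext i
  simpa [hπ, Equiv.Perm.one_def] using (hxy i).symm

end PApply

lemma uncurry_finSigmaEquiv_symm_apply {X : Type} {n : ℕ} {k : Fin n → ℕ}
    (xs : ∀ i, Fin (k i) → X) (i : Fin n) (j : Fin (k i)) :
    xs ((finSigmaEquiv k).symm (finSigmaEquiv k ⟨i, j⟩)).1
      ((finSigmaEquiv k).symm (finSigmaEquiv k ⟨i, j⟩)).2 = xs i j :=
  congrArg (fun s : Σ i, Fin (k i) => xs s.1 s.2) ((finSigmaEquiv k).symm_apply_apply _)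

section Pullbacks

open Limits PApply

variable {P : GOperad G A}

lemma isPullback_map_of_free
    (hfree : ∀ (n : ℕ) (p : P.P n) (g : G n), P.act p g = p → A.π n g = 1)
    {X₁ X₂ X₃ X₄ : Type} {t : X₁ ⟶ X₂} {l : X₁ ⟶ X₃} {r : X₂ ⟶ X₄} {b : X₃ ⟶ X₄}
    (h : IsPullback t l r b) :
    IsPullback ((PEndofunctor P).map t) ((PEndofunctor P).map l)
      ((PEndofunctor P).map r) ((PEndofunctor P).map b) := by
  obtain ⟨hw, hinj, hsurj⟩ := (Types.isPullback_iff _ _ _ _).mp h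
  refine (Types.isPullback_iff _ _ _ _).mpr
    ⟨by simp only [← Functor.map_comp, hw], ?_, ?_⟩
  · rintro z z' ⟨ht, hl⟩
    obtain ⟨n, p, xs', rfl⟩ := exists_eq_mk z'
    obtain ⟨xs, rfl, htx⟩ := exists_eq_mk_of_map_eq_mk t ht
    have hlx := eq_of_mk_eq_mk_of_free hfree hl
    rw [funext fun i => hinj (xs i) (xs' i) ⟨htx i, congrFun hlx i⟩]
  · intro z₂ z₃ hz
    obtain ⟨n, p, xs₃, rfl⟩ := exists_eq_mk z₃
    obtain ⟨xs₂, rfl, hr⟩ := exists_eq_mk_of_map_eq_mk r hz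
    choose xs₁ ht hl using fun i => hsurj (xs₂ i) (xs₃ i) (hr i)
    exact ⟨⟨n, Quot.mk _ (p, xs₁)⟩, by rw [← funext ht]; rfl, by rw [← funext hl]; rfl⟩

lemma isPullback_pUnitMap {X Y : Type} (f : X ⟶ Y) :
    IsPullback (pUnitMap P X) f ((PEndofunctor P).map f) (pUnitMap P Y) := by
  refine (Types.isPullback_iff _ _ _ _).mpr ⟨rfl, ?_, ?_⟩
  · rintro x x' ⟨hη, -⟩
    obtain ⟨g, -, hx⟩ := mk_eq_mk_iff.mp hη
    exact (hx 0).symm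
  · intro z y hz
    obtain ⟨xs, rfl, hf⟩ := exists_eq_mk_of_map_eq_mk f hz
    refine ⟨xs 0, ?_, hf 0⟩
    rw [show xs = fun _ => xs 0 from funext fun i => congrArg xs (Subsingleton.elim i 0)]
    rfl

lemma mu_naturality
    (mu : ∀ X : Type, (PEndofunctor P).obj ((PEndofunctor P).obj X) ⟶
      (PEndofunctor P).obj X) (hmu : IsPMulMap P mu) {X Y : Type} (f : X ⟶ Y) :
    mu X ≫ (PEndofunctor P).map f = (PEndofunctor P).map ((PEndofunctor P).map f) ≫ mu Y := by
  refine ConcreteCategory.hom_ext _ _ fun z => ?_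
  obtain ⟨n, p, v, rfl⟩ := exists_eq_mk z
  obtain ⟨k, q, xs, rfl⟩ := exists_eq_mk_pi v
  exact (congrArg ((PEndofunctor P).map f) (hmu X n k p q xs)).trans
    (hmu Y n k p q fun i j => f (xs i j)).symm

lemma isPullback_mu
    (hfree : ∀ (n : ℕ) (p : P.P n) (g : G n), P.act p g = p → A.π n g = 1)
    (mu : ∀ X : Type, (PEndofunctor P).obj ((PEndofunctor P).obj X) ⟶
      (PEndofunctor P).obj X) (hmu : IsPMulMap P mu) {X Y : Type} (f : X ⟶ Y) :
    IsPullback (mu X) ((PEndofunctor P).map ((PEndofunctor P).map f))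
      ((PEndofunctor P).map f) (mu Y) := by
  refine (Types.isPullback_iff _ _ _ _).mpr ⟨mu_naturality mu hmu f, ?_, ?_⟩
  · rintro z z' ⟨hm, hf⟩
    obtain ⟨n, p, v', rfl⟩ := exists_eq_mk z'
    obtain ⟨k, q, xs', rfl⟩ := exists_eq_mk_pi v'
    obtain ⟨v, rfl, hv⟩ := exists_eq_mk_of_map_eq_mk _ hf
    choose xs hxs _ using fun i => exists_eq_mk_of_map_eq_mk f (hv i)
    rw [funext hxs] at hm ⊢
    rw [hmu, hmu] at hm
    have hflat := eq_of_mk_eq_mk_of_free hfree hm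
    have hx : xs = xs' := by
      funext i j
      exact (uncurry_finSigmaEquiv_symm_apply xs i j).symm.trans
        ((congrFun hflat _).trans (uncurry_finSigmaEquiv_symm_apply xs' i j))
    rw [hx]
  · intro z w hz
    obtain ⟨n, p, v, rfl⟩ := exists_eq_mk w
    obtain ⟨k, q, ys, rfl⟩ := exists_eq_mk_pi v
    rw [hmu] at hz
    obtain ⟨xs, rfl, hf⟩ := exists_eq_mk_of_map_eq_mk f hz
    refine ⟨⟨n, Quot.mk _ (p, fun i => ⟨k i, Quot.mk _ (q i,
      fun j => xs (finSigmaEquiv k ⟨i, j⟩))⟩)⟩, ?_, ?_⟩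
    · rw [hmu]
      simp only [Sigma.eta, Equiv.apply_symm_apply]
      rfl
    · show (⟨n, Quot.mk _ (p, fun i => ⟨k i, Quot.mk _ (q i,
        fun j => f (xs (finSigmaEquiv k ⟨i, j⟩)))⟩)⟩ : PApply P (PApply P Y)) = _
      simp only [hf, uncurry_finSigmaEquiv_symm_apply]
      rfl

end Pullbacks

/-- If for every `n`, `p ∈ P(n)`, `g ∈ G(n)` with `p·g = p` the
permutation `πₙ(g)` is the identity, then the monad `P̲` on sets is cartesian: `P̲`
preserves pullbacks, and all naturality squares of the unit `η` and of the
multiplication `μ` are pullback squares. -/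
theorem pMonad_cartesian (G : ℕ → Type) [∀ n, Group (G n)]
    (A : ActionOperad G) (P : GOperad G A)
    (hfree : ∀ (n : ℕ) (p : P.P n) (g : G n), P.act p g = p → A.π n g = 1) :
    Nonempty (Limits.PreservesLimitsOfShape Limits.WalkingCospan
        (PEndofunctor P)) ∧
      (∀ (X Y : Type) (f : X ⟶ Y),
        IsPullback (pUnitMap P X) f ((PEndofunctor P).map f) (pUnitMap P Y)) ∧
      ∀ (mu : ∀ X : Type, (PEndofunctor P).obj ((PEndofunctor P).obj X) ⟶
          (PEndofunctor P).obj X), IsPMulMap P mu →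
        ∀ (X Y : Type) (f : X ⟶ Y),
          IsPullback (mu X) ((PEndofunctor P).map ((PEndofunctor P).map f))
            ((PEndofunctor P).map f) (mu Y) := by
  refine ⟨⟨Limits.preservesLimitsOfShape_walkingCospan_of_forall_isPullback fun _ _ _ f g _ =>
      ⟨_, _, _, .of_hasPullback f g, isPullback_map_of_free hfree (.of_hasPullback f g)⟩⟩,
    fun _ _ f => isPullback_pUnitMap f, fun mu hmu _ _ f => isPullback_mu hfree mu hmu f⟩
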